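/- For p ∈ {0, 2} and α > 0, define F_p(α) = ∫_{ℝ³} |v|^p · (α·e^{−|v|²/2})/(1 + α·e^{−|v|²/2}) dv (Lebesgue integral over ℝ³). Then there exists a constant l > 0 such that the map Φ : (0,∞)² → ℝ², Φ(a,b) = (b^{3/2}·F₀(a), b·F₂(a)/(2·F₀(a))), is injective, and for every (a,b) ∈ (0,∞)² the second component satisfies b·F₂(a)/(2·F₀(a)) > l · (b^{3/2}·F₀(a))^{2/3}. -/

import Mathlib

open MeasureTheory

/-- The Fermi integral `F_p α = ∫_{ℝ³} |v|^p (α e^{-|v|²/2})/(1 + α e^{-|v|²/2}) dv`. -/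
noncomputable def fermiIntegral (p : ℝ) (α : ℝ) : ℝ :=
  ∫ v : EuclideanSpace ℝ (Fin 3),
    ‖v‖ ^ p * (α * Real.exp (-‖v‖ ^ 2 / 2)) / (1 + α * Real.exp (-‖v‖ ^ 2 / 2))

/-!
In polar coordinates `F₀(a) = 4π M₂(a)` and `F₂(a) = 4π M₄(a)`, where `M_k` are the radial
moments `∫₀^∞ r^k f_a(r) dr` of the occupation `f_a = a e^{-r²/2} / (1 + a e^{-r²/2})`.
The temperature `b` drops out of `e³/ρ²`, a constant multiple of `ψ(a) = M₄³/M₂⁵`.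
Since `∂ₐ f_a = f_a (1 - f_a) / a` and `∂ᵣ f_a = -r f_a (1 - f_a)`, integration by parts
expresses `a ψ'(a)` as a positive multiple of `J₄² - J₂ J₆`, where `J_k` are the moments of
`f_a (1 - f_a)`; this is negative by the strict Cauchy–Schwarz inequality. So `ψ` is injective,
which recovers `a` and then `b`. For the bound, `0 < f_a < 1`, so by the bathtub principle a
weight of mass `M₂ = R³/3` has `M₄ ≥ R⁵/5`, the value for the indicator of `[0, R]`. Hence
`e ≥ (3/10) b R²`, while `ρ^{2/3}` is a constant multiple of `b R²`.
-/

open Set Filter Topology Real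

noncomputable def radialMoment (w : ℝ → ℝ) (k : ℕ) : ℝ := ∫ r in Ioi 0, r ^ k * w r

theorem setIntegral_Ioi_zero_pos {g : ℝ → ℝ} (hg : IntegrableOn g (Ioi 0))
    (hg_nonneg : ∀ r > 0, 0 ≤ g r) {a : ℝ} (hg_pos : ∀ r > a, 0 < g r) :
    0 < ∫ r in Ioi 0, g r := by
  rw [setIntegral_pos_iff_support_of_nonneg_ae
    ((ae_restrict_iff' measurableSet_Ioi).2 (ae_of_all _ hg_nonneg)) hg]
  have hsub : Ioi (max a 0) ⊆ Function.support g ∩ Ioi 0 := fun r hr =>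
    ⟨(hg_pos r (lt_of_le_of_lt (le_max_left _ _) hr)).ne',
      mem_Ioi.2 (lt_of_le_of_lt (le_max_right _ _) hr)⟩
  exact lt_of_lt_of_le (by simp) (measure_mono hsub)

section RadialMoment

variable {w : ℝ → ℝ}

theorem radialMoment_pos {k : ℕ} (hw : IntegrableOn (fun r => r ^ k * w r) (Ioi 0))
    (hw_pos : ∀ r > 0, 0 < w r) : 0 < radialMoment w k :=
  setIntegral_Ioi_zero_pos hw (fun r hr => (mul_pos (pow_pos hr k) (hw_pos r hr)).le)
    (fun r hr => mul_pos (pow_pos hr k) (hw_pos r hr))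

/-- The quadratic `t ↦ ∫ r^k w (t + r²)²` has no real root. -/
theorem radialMoment_sq_lt_mul {k : ℕ} (hk : IntegrableOn (fun r => r ^ k * w r) (Ioi 0))
    (hk2 : IntegrableOn (fun r => r ^ (k + 2) * w r) (Ioi 0))
    (hk4 : IntegrableOn (fun r => r ^ (k + 4) * w r) (Ioi 0)) (hw_pos : ∀ r > 0, 0 < w r) :
    radialMoment w (k + 2) ^ 2 < radialMoment w k * radialMoment w (k + 4) := by
  have hquad (t : ℝ) : 0 < radialMoment w k * (t * t) + 2 * radialMoment w (k + 2) * t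
      + radialMoment w (k + 4) := by
    have hsq (r : ℝ) : r ^ k * w r * (t + r ^ 2) ^ 2
        = t * t * (r ^ k * w r) + 2 * t * (r ^ (k + 2) * w r) + r ^ (k + 4) * w r := by
      ring
    have hint2 : IntegrableOn (fun r => t * t * (r ^ k * w r) + 2 * t * (r ^ (k + 2) * w r))
        (Ioi 0) := (hk.const_mul _).add (hk2.const_mul _)
    have hint : ∫ r in Ioi 0, r ^ k * w r * (t + r ^ 2) ^ 2 = radialMoment w k * (t * t)
        + 2 * radialMoment w (k + 2) * t + radialMoment w (k + 4) := by
      simp only [hsq]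
      rw [integral_add hint2 hk4, integral_add (hk.const_mul _) (hk2.const_mul _),
        integral_const_mul, integral_const_mul]
      simp only [radialMoment]
      ring
    rw [← hint]
    refine setIntegral_Ioi_zero_pos ?_ (fun r hr => by have := hw_pos r hr; positivity)
      (a := |t| + 1) fun r hr => ?_
    · simp only [hsq]
      exact hint2.add hk4
    · have hr1 : 1 < r := by linarith [abs_nonneg t]
      have : 0 < t + r ^ 2 := by nlinarith [neg_abs_le t]
      have := hw_pos r (by linarith)
      positivity
  have := discrim_lt_zero (radialMoment_pos hk hw_pos).ne' hquad
  rw [discrim] at this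
  linarith

theorem radialMoment_bathtub (hw : IntegrableOn (fun r => r ^ 2 * w r) (Ioi 0))
    (hw4 : IntegrableOn (fun r => r ^ 4 * w r) (Ioi 0))
    (hw_nonneg : ∀ r > 0, 0 ≤ w r) (hw_le : ∀ r > 0, w r ≤ 1) {R : ℝ} (hR : 0 ≤ R)
    (hmass : radialMoment w 2 = R ^ 3 / 3) : R ^ 5 / 5 ≤ radialMoment w 4 := by
  have hbathtub : ∫ r in Ioi 0, (Ioc 0 R).indicator (fun r => r ^ 4 - R ^ 2 * r ^ 2) r
      = R ^ 5 / 5 - R ^ 2 * (R ^ 3 / 3) := by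
    rw [setIntegral_indicator measurableSet_Ioc, inter_eq_right.2 Ioc_subset_Ioi_self,
      ← intervalIntegral.integral_of_le hR, intervalIntegral.integral_sub
      (intervalIntegral.intervalIntegrable_pow 4)
      ((intervalIntegral.intervalIntegrable_pow 2).const_mul _),
      intervalIntegral.integral_const_mul, integral_pow, integral_pow]
    ring
  -- `(r⁴ - R² r²) (w r - 1_{(0,R]} r) ≥ 0` pointwise
  have hle : ∫ r in Ioi 0, (Ioc 0 R).indicator (fun r => r ^ 4 - R ^ 2 * r ^ 2) r
      ≤ ∫ r in Ioi 0, (r ^ 4 * w r - R ^ 2 * (r ^ 2 * w r)) := by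
    refine setIntegral_mono_on ?_ (hw4.sub (hw.const_mul _)) measurableSet_Ioi fun r hr => ?_
    · exact ((continuous_pow 4).sub (continuous_const.mul (continuous_pow 2))).integrableOn_Ioc
        |>.integrable_indicator measurableSet_Ioc |>.integrableOn
    have h0 := hw_nonneg r hr
    have h1 := hw_le r hr
    by_cases hrR : r ≤ R
    · rw [indicator_of_mem (mem_Ioc.2 ⟨hr, hrR⟩)]
      have : r ^ 2 ≤ R ^ 2 := pow_le_pow_left₀ (le_of_lt hr) hrR 2
      nlinarith [mul_nonneg (mul_nonneg (sq_nonneg r) (sub_nonneg.2 this)) (sub_nonneg.2 h1)]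
    · rw [indicator_of_notMem fun h => hrR h.2]
      have : R ^ 2 ≤ r ^ 2 := pow_le_pow_left₀ hR (le_of_not_ge hrR) 2
      nlinarith [mul_nonneg (mul_nonneg (sq_nonneg r) (sub_nonneg.2 this)) h0]
  rw [hbathtub, integral_sub hw4 (hw.const_mul _), integral_const_mul] at hle
  simp only [radialMoment] at hmass ⊢
  rw [hmass] at hle
  linarith

end RadialMoment

noncomputable def fermiOccupation (α r : ℝ) : ℝ :=
  α * exp (-r ^ 2 / 2) / (1 + α * exp (-r ^ 2 / 2))

noncomputable def fermiFluctuation (α r : ℝ) : ℝ :=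
  fermiOccupation α r * (1 - fermiOccupation α r)

section FermiOccupation

variable {α : ℝ}

theorem fermiOccupation_pos (hα : 0 < α) (r : ℝ) : 0 < fermiOccupation α r := by
  unfold fermiOccupation; positivity

theorem fermiOccupation_lt_one (hα : 0 ≤ α) (r : ℝ) : fermiOccupation α r < 1 := by
  rw [fermiOccupation, div_lt_one (by positivity)]
  linarith

theorem fermiOccupation_le (hα : 0 ≤ α) (r : ℝ) :
    fermiOccupation α r ≤ α * exp (-r ^ 2 / 2) :=
  div_le_self (by positivity) (by simp only [le_add_iff_nonneg_right]; positivity)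

theorem one_sub_fermiOccupation (hα : 0 ≤ α) (r : ℝ) :
    1 - fermiOccupation α r = 1 / (1 + α * exp (-r ^ 2 / 2)) := by
  have : 0 < 1 + α * exp (-r ^ 2 / 2) := by positivity
  rw [fermiOccupation]
  field_simp
  ring

theorem continuous_fermiOccupation (hα : 0 ≤ α) : Continuous (fermiOccupation α) := by
  unfold fermiOccupation
  exact Continuous.div (by fun_prop) (by fun_prop) fun r => by positivity

theorem fermiFluctuation_pos (hα : 0 < α) (r : ℝ) : 0 < fermiFluctuation α r :=
  mul_pos (fermiOccupation_pos hα r) (sub_pos.2 (fermiOccupation_lt_one hα.le r))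

theorem fermiFluctuation_le (hα : 0 < α) (r : ℝ) :
    fermiFluctuation α r ≤ fermiOccupation α r :=
  mul_le_of_le_one_right (fermiOccupation_pos hα r).le
    (by linarith [fermiOccupation_pos hα r])

theorem continuous_fermiFluctuation (hα : 0 ≤ α) : Continuous (fermiFluctuation α) :=
  (continuous_fermiOccupation hα).mul (continuous_const.sub (continuous_fermiOccupation hα))

theorem hasDerivAt_fermiOccupation (hα : 0 ≤ α) (r : ℝ) :
    HasDerivAt (fermiOccupation α) (-(r * fermiFluctuation α r)) r := by
  have hexp : HasDerivAt (fun s : ℝ => -s ^ 2 / 2) (-r) r :=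
    ((hasDerivAt_pow 2 r).neg.div_const 2).congr_deriv (by norm_num; ring)
  have hE := hexp.exp.const_mul α
  have hd : 1 + α * exp (-r ^ 2 / 2) ≠ 0 := by positivity
  refine (hE.div (hE.const_add 1) hd).congr_deriv ?_
  rw [fermiFluctuation, one_sub_fermiOccupation hα, fermiOccupation]
  field_simp
  ring

theorem hasDerivAt_fermiOccupation_fugacity (hα : 0 < α) (r : ℝ) :
    HasDerivAt (fun x => fermiOccupation x r) (fermiFluctuation α r / α) α := by
  have hd : 1 + α * exp (-r ^ 2 / 2) ≠ 0 := by positivity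
  have hE := (hasDerivAt_id α).mul_const (exp (-r ^ 2 / 2))
  refine (hE.div (hE.const_add 1) hd).congr_deriv ?_
  rw [fermiFluctuation, one_sub_fermiOccupation hα.le, fermiOccupation]
  simp only [id, one_mul]
  field_simp
  ring

end FermiOccupation

theorem integrableOn_pow_mul_exp_neg_sq_div_two (k : ℕ) :
    IntegrableOn (fun r : ℝ => r ^ k * exp (-r ^ 2 / 2)) (Ioi 0) := by
  refine (integrableOn_rpow_mul_exp_neg_mul_sq (b := 1 / 2) (by norm_num) (s := k)
    (by linarith [k.cast_nonneg (α := ℝ)])).congr_fun (fun r _ => ?_) measurableSet_Ioi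
  dsimp only
  rw [rpow_natCast]
  ring_nf

theorem integrableOn_pow_mul_of_abs_le_exp {w : ℝ → ℝ} (hw : Continuous w) {C : ℝ}
    (hC : ∀ r, |w r| ≤ C * exp (-r ^ 2 / 2)) (k : ℕ) :
    IntegrableOn (fun r => r ^ k * w r) (Ioi 0) := by
  refine ((integrableOn_pow_mul_exp_neg_sq_div_two k).const_mul C).mono'
    ((continuous_pow k).mul hw).aestronglyMeasurable ?_
  filter_upwards [ae_restrict_mem measurableSet_Ioi] with r (hr : 0 < r)
  rw [norm_mul, norm_pow, Real.norm_of_nonneg hr.le, Real.norm_eq_abs, mul_left_comm]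
  exact mul_le_mul_of_nonneg_left (hC r) (by positivity)

theorem tendsto_pow_mul_exp_neg_sq_div_two_atTop (k : ℕ) :
    Tendsto (fun r : ℝ => r ^ k * exp (-r ^ 2 / 2)) atTop (𝓝 0) := by
  refine ((tendsto_rpow_abs_mul_exp_neg_mul_sq_cocompact (a := 1 / 2) (by norm_num) k).mono_left
    atTop_le_cocompact).congr' ?_
  filter_upwards [eventually_ge_atTop 0] with r hr
  rw [abs_of_nonneg hr, rpow_natCast]
  ring_nf

section FermiMoments

variable {α : ℝ}

theorem integrableOn_pow_mul_fermiOccupation (hα : 0 < α) (k : ℕ) :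
    IntegrableOn (fun r => r ^ k * fermiOccupation α r) (Ioi 0) :=
  integrableOn_pow_mul_of_abs_le_exp (continuous_fermiOccupation hα.le) (fun r => by
    rw [abs_of_pos (fermiOccupation_pos hα r)]; exact fermiOccupation_le hα.le r) k

theorem integrableOn_pow_mul_fermiFluctuation (hα : 0 < α) (k : ℕ) :
    IntegrableOn (fun r => r ^ k * fermiFluctuation α r) (Ioi 0) :=
  integrableOn_pow_mul_of_abs_le_exp (continuous_fermiFluctuation hα.le) (fun r => by
    rw [abs_of_pos (fermiFluctuation_pos hα r)]
    exact (fermiFluctuation_le hα r).trans (fermiOccupation_le hα.le r)) k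

theorem radialMoment_fermiOccupation_pos (hα : 0 < α) (k : ℕ) :
    0 < radialMoment (fermiOccupation α) k :=
  radialMoment_pos (integrableOn_pow_mul_fermiOccupation hα k) fun r _ =>
    fermiOccupation_pos hα r

theorem tendsto_pow_mul_fermiOccupation_atTop (hα : 0 < α) (k : ℕ) :
    Tendsto (fun r => r ^ k * fermiOccupation α r) atTop (𝓝 0) := by
  refine tendsto_of_tendsto_of_tendsto_of_le_of_le' tendsto_const_nhds
    (by simpa using (tendsto_pow_mul_exp_neg_sq_div_two_atTop k).const_mul α) ?_ ?_
  · filter_upwards [eventually_ge_atTop 0] with r hr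
    have := fermiOccupation_pos hα r
    positivity
  · filter_upwards [eventually_ge_atTop 0] with r hr
    rw [mul_left_comm]
    exact mul_le_mul_of_nonneg_left (fermiOccupation_le hα.le r) (by positivity)

/-- Integration by parts, using `∂ᵣ f = -r f (1 - f)`. -/
theorem radialMoment_fermiFluctuation (hα : 0 < α) (k : ℕ) :
    radialMoment (fermiFluctuation α) (k + 2)
      = (k + 1) * radialMoment (fermiOccupation α) k := by
  have hderiv (r : ℝ) (_ : r ∈ Ioi 0) : HasDerivAt (fun r => r ^ (k + 1) * fermiOccupation α r)
      ((k + 1) * (r ^ k * fermiOccupation α r) - r ^ (k + 2) * fermiFluctuation α r) r :=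
    ((hasDerivAt_pow (k + 1) r).mul (hasDerivAt_fermiOccupation hα.le r)).congr_deriv
      (by push_cast; ring)
  have hint := (integrableOn_pow_mul_fermiOccupation hα k).const_mul (k + 1 : ℝ)
  have h := integral_Ioi_of_hasDerivAt_of_tendsto
    ((continuous_pow _).mul (continuous_fermiOccupation hα.le)).continuousWithinAt hderiv
    (hint.sub (integrableOn_pow_mul_fermiFluctuation hα (k + 2)))
    (tendsto_pow_mul_fermiOccupation_atTop hα (k + 1))
  rw [integral_sub hint (integrableOn_pow_mul_fermiFluctuation hα (k + 2)),
    integral_const_mul] at h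
  simp only [Pi.mul_apply, zero_pow k.succ_ne_zero, zero_mul, sub_zero, sub_eq_zero] at h
  exact h.symm

theorem hasDerivAt_radialMoment_fermiOccupation (hα : 0 < α) (k : ℕ) :
    HasDerivAt (fun x => radialMoment (fermiOccupation x) k)
      (radialMoment (fermiFluctuation α) k / α) α := by
  have key := hasDerivAt_integral_of_dominated_loc_of_deriv_le (μ := volume.restrict (Ioi 0))
    (F := fun x r => r ^ k * fermiOccupation x r)
    (F' := fun x r => r ^ k * (fermiFluctuation x r / x))
    (Ioi_mem_nhds hα) (eventually_gt_nhds hα |>.mono fun x hx =>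
      ((continuous_pow k).mul (continuous_fermiOccupation hx.le)).aestronglyMeasurable)
    (integrableOn_pow_mul_fermiOccupation hα k)
    (((continuous_pow k).mul
      ((continuous_fermiFluctuation hα.le).div_const α)).aestronglyMeasurable) ?_
    (integrableOn_pow_mul_exp_neg_sq_div_two k) ?_
  · simp only [mul_div_assoc', integral_div] at key
    exact key.2
  · filter_upwards [ae_restrict_mem measurableSet_Ioi] with r (hr : 0 < r) x (hx : 0 < x)
    have hle : fermiFluctuation x r / x ≤ exp (-r ^ 2 / 2) := by
      rw [div_le_iff₀ hx, mul_comm]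
      exact (fermiFluctuation_le hx r).trans (fermiOccupation_le hx.le r)
    rw [norm_mul, norm_pow, Real.norm_of_nonneg hr.le,
      Real.norm_of_nonneg (div_nonneg (fermiFluctuation_pos hx r).le hx.le)]
    exact mul_le_mul_of_nonneg_left hle (by positivity)
  · exact ae_of_all _ fun r x hx => (hasDerivAt_fermiOccupation_fugacity hx r).const_mul _

end FermiMoments

noncomputable def fermiMomentRatio (α : ℝ) : ℝ :=
  radialMoment (fermiOccupation α) 4 ^ 3 / radialMoment (fermiOccupation α) 2 ^ 5

theorem hasDerivAt_fermiMomentRatio_neg {α : ℝ} (hα : 0 < α) :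
    ∃ D < 0, HasDerivAt fermiMomentRatio D α := by
  have hM2 := radialMoment_fermiOccupation_pos hα 2
  refine ⟨_, ?_, ((hasDerivAt_radialMoment_fermiOccupation hα 4).pow 3).div
    ((hasDerivAt_radialMoment_fermiOccupation hα 2).pow 5) (pow_ne_zero 5 hM2.ne')⟩
  simp only [Pi.pow_apply]
  set M := radialMoment (fermiOccupation α)
  set J := radialMoment (fermiFluctuation α)
  have hM4 : 0 < M 4 := radialMoment_fermiOccupation_pos hα 4
  have hJ4 : J 4 = 3 * M 2 := (radialMoment_fermiFluctuation hα 2).trans (by norm_num [M])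
  have hJ6 : J 6 = 5 * M 4 := (radialMoment_fermiFluctuation hα 4).trans (by norm_num [M])
  have hcs : J 4 ^ 2 < J 2 * J 6 := radialMoment_sq_lt_mul (k := 2)
    (integrableOn_pow_mul_fermiFluctuation hα _) (integrableOn_pow_mul_fermiFluctuation hα _)
    (integrableOn_pow_mul_fermiFluctuation hα _) fun r _ => fermiFluctuation_pos hα r
  have hnum : (3 : ℕ) * M 4 ^ (3 - 1) * (J 4 / α) * M 2 ^ 5
      - M 4 ^ 3 * ((5 : ℕ) * M 2 ^ (5 - 1) * (J 2 / α))
      = M 4 ^ 2 * M 2 ^ 4 / α * (J 4 ^ 2 - J 2 * J 6) := by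
    rw [hJ4, hJ6]
    push_cast
    ring
  rw [hnum]
  exact div_neg_of_neg_of_pos (mul_neg_of_pos_of_neg (by positivity) (by linarith))
    (by positivity)

theorem strictAntiOn_fermiMomentRatio : StrictAntiOn fermiMomentRatio (Ioi 0) := by
  choose! D hD_neg hD using
    fun α (hα : α ∈ Ioi (0 : ℝ)) => hasDerivAt_fermiMomentRatio_neg hα
  refine strictAntiOn_of_hasDerivWithinAt_neg (f' := D) (convex_Ioi 0)
    (fun α hα => (hD α hα).continuousAt.continuousWithinAt) (fun α hα => ?_)
    (fun α hα => ?_)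
  · rw [interior_Ioi] at hα ⊢
    exact (hD α hα).hasDerivWithinAt
  · rw [interior_Ioi] at hα
    exact hD_neg α hα

theorem radialMoment_fermiOccupation_bathtub {α : ℝ} (hα : 0 < α) :
    ∃ R > 0, radialMoment (fermiOccupation α) 2 = R ^ 3 / 3 ∧
      R ^ 5 / 5 ≤ radialMoment (fermiOccupation α) 4 := by
  have hM2 := radialMoment_fermiOccupation_pos hα 2
  set R := (3 * radialMoment (fermiOccupation α) 2) ^ ((3 : ℕ)⁻¹ : ℝ)
  have hR : radialMoment (fermiOccupation α) 2 = R ^ 3 / 3 := by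
    rw [rpow_inv_natCast_pow (by positivity) (by norm_num)]
    ring
  refine ⟨R, by positivity, hR, radialMoment_bathtub
    (integrableOn_pow_mul_fermiOccupation hα 2) (integrableOn_pow_mul_fermiOccupation hα 4)
    (fun r _ => (fermiOccupation_pos hα r).le) (fun r _ => (fermiOccupation_lt_one hα.le r).le)
    (by positivity) hR⟩

theorem fermiIntegral_natCast (n : ℕ) (α : ℝ) :
    fermiIntegral n α = 3 * volume.real (Metric.ball (0 : EuclideanSpace ℝ (Fin 3)) 1) *
      radialMoment (fermiOccupation α) (n + 2) := by
  have : fermiIntegral n α =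
      ∫ v : EuclideanSpace ℝ (Fin 3), (fun r => r ^ n * fermiOccupation α r) ‖v‖ := by
    simp only [fermiIntegral, rpow_natCast, fermiOccupation, mul_div_assoc]
  rw [this, integral_fun_norm_addHaar volume (fun r => r ^ n * fermiOccupation α r),
    finrank_euclideanSpace_fin, radialMoment]
  simp only [nsmul_eq_mul, smul_eq_mul, Nat.cast_ofNat, ← mul_assoc, ← pow_add]
  ring_nf

theorem energy_cube_div_mass_sq {b c x y : ℝ} (hb : 0 < b) (hc : c ≠ 0) (hx : x ≠ 0) :
    (b * (c * y) / (2 * (c * x))) ^ 3 / (b ^ ((3 : ℝ) / 2) * (c * x)) ^ 2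
      = y ^ 3 / x ^ 5 / (8 * c ^ 2) := by
  have hb3 : (b ^ ((3 : ℝ) / 2)) ^ 2 = b ^ 3 := by
    rw [← rpow_natCast, ← rpow_mul hb.le]
    norm_num
  rw [mul_pow, hb3]
  field_simp
  ring

/-- Halving the constant `(3/10) (3/c)^{2/3}` of the bathtub bound makes the inequality strict. -/
theorem mass_pow_lt_energy {b c R y : ℝ} (hb : 0 < b) (hc : 0 < c) (hR : 0 < R)
    (hy : R ^ 5 / 5 ≤ y) :
    3 / 20 * (3 / c) ^ ((2 : ℝ) / 3) * (b ^ ((3 : ℝ) / 2) * (c * (R ^ 3 / 3))) ^ ((2 : ℝ) / 3)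
      < b * (c * y) / (2 * (c * (R ^ 3 / 3))) := by
  have hmass :
      (3 / c) ^ ((2 : ℝ) / 3) * (b ^ ((3 : ℝ) / 2) * (c * (R ^ 3 / 3))) ^ ((2 : ℝ) / 3)
        = b * R ^ 2 := by
    have hR3 : (R ^ 2) ^ ((3 : ℝ) / 2) = R ^ 3 := by
      rw [← rpow_natCast R 2, ← rpow_mul hR.le]
      norm_num
    have hinner : 3 / c * (b ^ ((3 : ℝ) / 2) * (c * (R ^ 3 / 3)))
        = (b * R ^ 2) ^ ((3 : ℝ) / 2) := by
      rw [mul_rpow hb.le (by positivity), hR3]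
      field_simp
    rw [← mul_rpow (by positivity) (by positivity), hinner, ← rpow_mul (by positivity)]
    norm_num
  rw [mul_assoc, hmass, lt_div_iff₀ (by positivity)]
  nlinarith [mul_le_mul_of_nonneg_left hy (mul_pos hb hc).le,
    mul_pos (mul_pos hb hc) (pow_pos hR 5)]

theorem injOn_mass_energy {c : ℝ} (hc : 0 < c) :
    InjOn (fun ab : ℝ × ℝ =>
      (ab.2 ^ ((3 : ℝ) / 2) * (c * radialMoment (fermiOccupation ab.1) 2),
       ab.2 * (c * radialMoment (fermiOccupation ab.1) 4)
        / (2 * (c * radialMoment (fermiOccupation ab.1) 2))))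
      (Ioi 0 ×ˢ Ioi 0) := by
  rintro ⟨a, b⟩ ⟨ha, hb⟩ ⟨a', b'⟩ ⟨ha', hb'⟩ h
  simp only [Prod.mk.injEq] at h ⊢
  obtain ⟨hmass, henergy⟩ := h
  have hM2 := radialMoment_fermiOccupation_pos ha 2
  have hM2' := radialMoment_fermiOccupation_pos ha' 2
  have hratio : fermiMomentRatio a = fermiMomentRatio a' := by
    have := congrArg₂ (fun ρ e => e ^ 3 / ρ ^ 2) hmass henergy
    simp only [energy_cube_div_mass_sq hb hc.ne' hM2.ne',
      energy_cube_div_mass_sq hb' hc.ne' hM2'.ne'] at this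
    exact (div_left_inj' (by positivity)).1 this
  obtain rfl : a = a' := strictAntiOn_fermiMomentRatio.injOn ha ha' hratio
  refine ⟨rfl, (rpow_left_inj hb.le hb'.le (by norm_num : (3 : ℝ) / 2 ≠ 0)).1 ?_⟩
  exact mul_right_cancel₀ (mul_pos hc hM2).ne' hmass

/-- There is `l > 0` such that the map `(a,b) ↦ (ρ, e) = (b^{3/2} F₀(a), b F₂(a)/(2 F₀(a)))`
is injective on `(0,∞)²`, and its image lies in the region `{(ρ,e) : e > l ρ^{2/3}}`. -/
theorem fermi_mass_energy_injective :
    ∃ l : ℝ, 0 < l ∧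
      Set.InjOn
        (fun ab : ℝ × ℝ =>
          (ab.2 ^ ((3 : ℝ) / 2) * fermiIntegral 0 ab.1,
           ab.2 * fermiIntegral 2 ab.1 / (2 * fermiIntegral 0 ab.1)))
        (Set.Ioi (0 : ℝ) ×ˢ Set.Ioi (0 : ℝ)) ∧
      ∀ a b : ℝ, 0 < a → 0 < b →
        l * (b ^ ((3 : ℝ) / 2) * fermiIntegral 0 a) ^ ((2 : ℝ) / 3) <
          b * fermiIntegral 2 a / (2 * fermiIntegral 0 a) := by
  set c := 3 * volume.real (Metric.ball (0 : EuclideanSpace ℝ (Fin 3)) 1)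
  have hc : 0 < c := mul_pos three_pos
    (ENNReal.toReal_pos (Metric.measure_ball_pos _ _ one_pos).ne' measure_ball_lt_top.ne)
  have hF0 (a : ℝ) : fermiIntegral 0 a = c * radialMoment (fermiOccupation a) 2 := by
    simpa using fermiIntegral_natCast 0 a
  have hF2 (a : ℝ) : fermiIntegral 2 a = c * radialMoment (fermiOccupation a) 4 := by
    simpa using fermiIntegral_natCast 2 a
  refine ⟨3 / 20 * (3 / c) ^ ((2 : ℝ) / 3), by positivity, ?_, fun a b ha hb => ?_⟩
  · simpa only [hF0, hF2] using injOn_mass_energy hc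
  · obtain ⟨R, hR, hM2, hM4⟩ := radialMoment_fermiOccupation_bathtub ha
    rw [hF0, hF2, hM2]
    exact mass_pow_lt_energy hb hc hR hM4
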